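/- Let k be an infinite field, let j ≥ 1, let n_1,…,n_j ≥ 0, and let Z ⊆ k^{n_1+1} × ⋯ × k^{n_j+1} be closed under independent scalings, i.e., if (x^{(1)},…,x^{(j)}) ∈ Z and t_1,…,t_j ∈ k then (t_1·x^{(1)},…,t_j·x^{(j)}) ∈ Z. Suppose the image S of Z ∩ ((k^{n_1+1}\{0}) × ⋯ × (k^{n_j+1}\{0})) under the factorwise quotient map to ℙ^{n_1}(k) × ⋯ × ℙ^{n_j}(k) is a finite set of q points. Then there exist vectors λ^{(1)} ∈ k^{n_1+1}, …, λ^{(j)} ∈ k^{n_j+1} such that the affine set Z ∩ {(x^{(1)},…,x^{(j)}) : Σ_t λ^{(i)}_t x^{(i)}_t = 1 for each i = 1,…,j} is finite and contains exactly q points; moreover, for such λ^{(1)},…,λ^{(j)} the factorwise quotient map restricts to a bijection from this affine set onto S. -/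

import Mathlib

/-!
Choose, in each factor, a linear form `λ⁽ⁱ⁾` that vanishes at no representative of the finitely
many points of `S`; possible because a vector space over an infinite field is not a finite
union of hyperplanes. Every nonzero `x⁽ⁱ⁾` lying over a point of `S` then has `λ⁽ⁱ⁾ ⬝ᵥ x⁽ⁱ⁾ ≠ 0`,
so rescaling each factor by `(λ⁽ⁱ⁾ ⬝ᵥ x⁽ⁱ⁾)⁻¹` (allowed since `Z` is closed under scalings) gives
the unique point of the affine slice over `[x]`.
-/

/-- The quotient map `k^{n+1} \ {0} → ℙ^n(k)`, extended arbitrarily (by the class of the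
constant vector `1`) at `0`. On nonzero vectors it agrees with `Projectivization.mk`. -/
noncomputable def projOf {k : Type*} [Field k] {n : ℕ} (x : Fin (n + 1) → k) :
    Projectivization k (Fin (n + 1) → k) :=
  letI := Classical.dec (x = 0)
  if hx : x = 0 then
    Projectivization.mk k (fun _ => 1)
      (fun h => one_ne_zero (congrFun h ⟨0, Nat.succ_pos n⟩))
  else Projectivization.mk k x hx

theorem exists_dotProduct_ne_zero {K ι : Type*} [Field K] [Infinite K] [Fintype ι]
    [DecidableEq ι] {s : Set (ι → K)} (hs : s.Finite) (hs0 : ∀ v ∈ s, v ≠ 0) :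
    ∃ lam : ι → K, ∀ v ∈ s, lam ⬝ᵥ v ≠ 0 := by
  have := hs.to_subtype
  obtain ⟨f, hf⟩ := Module.exists_dual_forall_apply_ne_zero (K := K)
    (fun v : s => (v : ι → K)) fun v => hs0 v v.2
  refine ⟨(dotProductEquiv K ι).symm f, fun v hv => ?_⟩
  rw [← dotProductEquiv_apply_apply, LinearEquiv.apply_symm_apply]
  exact hf ⟨v, hv⟩

section projOf

variable {k : Type*} [Field k] {n : ℕ} {x y : Fin (n + 1) → k}

theorem projOf_of_ne_zero (hx : x ≠ 0) : projOf x = Projectivization.mk k x hx :=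
  dif_neg hx

theorem projOf_rep (p : Projectivization k (Fin (n + 1) → k)) : projOf p.rep = p := by
  rw [projOf_of_ne_zero p.rep_nonzero, p.mk_rep]

theorem projOf_eq_projOf_iff (hx : x ≠ 0) (hy : y ≠ 0) :
    projOf x = projOf y ↔ ∃ a : kˣ, a • y = x := by
  rw [projOf_of_ne_zero hx, projOf_of_ne_zero hy, Projectivization.mk_eq_mk_iff]

theorem projOf_smul {c : k} (hc : c ≠ 0) (hx : x ≠ 0) : projOf (c • x) = projOf x :=
  (projOf_eq_projOf_iff (smul_ne_zero hc hx) hx).mpr ⟨Units.mk0 c hc, rfl⟩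

theorem dotProduct_ne_zero_of_projOf_eq (hx : x ≠ 0) (hy : y ≠ 0) (hxy : projOf x = projOf y)
    {lam : Fin (n + 1) → k} (hy' : lam ⬝ᵥ y ≠ 0) : lam ⬝ᵥ x ≠ 0 := by
  obtain ⟨a, rfl⟩ := (projOf_eq_projOf_iff hx hy).mp hxy
  rw [dotProduct_smul, Units.smul_def, smul_eq_mul]
  exact mul_ne_zero a.ne_zero hy'

theorem eq_of_projOf_eq_of_dotProduct_eq_one (hx : x ≠ 0) (hy : y ≠ 0)
    (hxy : projOf x = projOf y) {lam : Fin (n + 1) → k} (hx1 : lam ⬝ᵥ x = 1)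
    (hy1 : lam ⬝ᵥ y = 1) : x = y := by
  obtain ⟨a, rfl⟩ := (projOf_eq_projOf_iff hx hy).mp hxy
  rw [dotProduct_smul, hy1, Units.smul_def, smul_eq_mul, mul_one] at hx1
  rw [Units.smul_def, hx1, one_smul]

theorem ne_zero_of_dotProduct_eq_one {lam : Fin (n + 1) → k} (hx1 : lam ⬝ᵥ x = 1) : x ≠ 0 := by
  rintro rfl
  simp at hx1

end projOf

section Multicone

variable {k ι : Type*} [Field k] {n : ι → ℕ} {Z : Set (∀ i, Fin (n i + 1) → k)}

noncomputable def multiProj (x : ∀ i, Fin (n i + 1) → k) (i : ι) :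
    Projectivization k (Fin (n i + 1) → k) :=
  projOf (x i)

theorem exists_dehomogenizer [Infinite k]
    (hS : (multiProj '' (Z ∩ {x | ∀ i, x i ≠ 0})).Finite) :
    ∃ lam : ∀ i, Fin (n i + 1) → k,
      ∀ x ∈ Z, (∀ i, x i ≠ 0) → ∀ i, lam i ⬝ᵥ x i ≠ 0 := by
  have hrep i := exists_dotProduct_ne_zero (hS.image fun p => (p i).rep)
    (by rintro - ⟨p, -, rfl⟩; exact (p i).rep_nonzero)
  choose lam hlam using hrep
  refine ⟨lam, fun x hxZ hx0 i => ?_⟩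
  exact dotProduct_ne_zero_of_projOf_eq (hx0 i) (multiProj x i).rep_nonzero
    (projOf_rep _).symm (hlam i _ ⟨multiProj x, ⟨x, ⟨hxZ, hx0⟩, rfl⟩, rfl⟩)

theorem bijOn_multiProj_dehomogenize (hZ : ∀ x ∈ Z, ∀ t : ι → k, (fun i => t i • x i) ∈ Z)
    {lam : ∀ i, Fin (n i + 1) → k} (hlam : ∀ x ∈ Z, (∀ i, x i ≠ 0) → ∀ i, lam i ⬝ᵥ x i ≠ 0) :
    Set.BijOn multiProj (Z ∩ {x | ∀ i, lam i ⬝ᵥ x i = 1})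
      (multiProj '' (Z ∩ {x | ∀ i, x i ≠ 0})) := by
  refine ⟨fun x hx => ⟨x, ⟨hx.1, fun i => ne_zero_of_dotProduct_eq_one (hx.2 i)⟩, rfl⟩,
    fun x hx y hy hxy => funext fun i => ?_, ?_⟩
  · exact eq_of_projOf_eq_of_dotProduct_eq_one (ne_zero_of_dotProduct_eq_one (hx.2 i))
      (ne_zero_of_dotProduct_eq_one (hy.2 i)) (congrFun hxy i) (hx.2 i) (hy.2 i)
  · rintro - ⟨x, ⟨hxZ, hx0⟩, rfl⟩
    refine ⟨fun i => (lam i ⬝ᵥ x i)⁻¹ • x i, ⟨hZ x hxZ _, fun i => ?_⟩, funext fun i => ?_⟩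
    · rw [dotProduct_smul, smul_eq_mul, inv_mul_cancel₀ (hlam x hxZ hx0 i)]
    · exact projOf_smul (inv_ne_zero (hlam x hxZ hx0 i)) (hx0 i)

end Multicone

theorem multicone_dehomogenize_count_general
    {k : Type*} [Field k] [Infinite k] {j : ℕ} (n : Fin j → ℕ)
    (Z : Set (∀ i : Fin j, Fin (n i + 1) → k))
    (hZ : ∀ x ∈ Z, ∀ t : Fin j → k, (fun i => t i • x i) ∈ Z)
    (q : ℕ)
    (hSfin : ((fun x (i : Fin j) => projOf (x i)) '' (Z ∩ {x | ∀ i, x i ≠ 0})).Finite)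
    (hSq : ((fun x (i : Fin j) => projOf (x i)) '' (Z ∩ {x | ∀ i, x i ≠ 0})).ncard = q) :
    ∃ lam : ∀ i : Fin j, Fin (n i + 1) → k,
      (Z ∩ {x | ∀ i, ∑ t, lam i t * x i t = 1}).Finite ∧
      (Z ∩ {x | ∀ i, ∑ t, lam i t * x i t = 1}).ncard = q ∧
      (∀ x ∈ Z ∩ {x | ∀ i, ∑ t, lam i t * x i t = 1}, ∀ i, x i ≠ 0) ∧
      Set.BijOn (fun x (i : Fin j) => projOf (x i))
        (Z ∩ {x | ∀ i, ∑ t, lam i t * x i t = 1})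
        ((fun x (i : Fin j) => projOf (x i)) '' (Z ∩ {x | ∀ i, x i ≠ 0})) := by
  obtain ⟨lam, hlam⟩ := exists_dehomogenizer hSfin
  have hbij := bijOn_multiProj_dehomogenize hZ hlam
  exact ⟨lam, hbij.finite_iff_finite.mpr hSfin, hbij.ncard_eq.trans hSq,
    fun x hx i => ne_zero_of_dotProduct_eq_one (hx.2 i), hbij⟩

/-- Counting points via a general dehomogenizing ideal for a product of projective
spaces `ℙ^{n_1} × ⋯ × ℙ^{n_j}`: if `Z` is closed under independent scalings of the
factors and its image `S` under the factorwise quotient map is a finite set of `q`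
points, then there are vectors `λ^{(1)}, …, λ^{(j)}` so that the affine set cut out by
the `j` equations `∑_t λ^{(i)}_t x^{(i)}_t = 1` is finite with exactly `q` points, and
the factorwise quotient map restricts to a bijection from this affine set onto `S`. -/
theorem multicone_dehomogenize_count
    {k : Type*} [Field k] [Infinite k] {j : ℕ} (hj : 1 ≤ j) (n : Fin j → ℕ)
    (Z : Set (∀ i : Fin j, Fin (n i + 1) → k))
    (hZ : ∀ x ∈ Z, ∀ t : Fin j → k, (fun i => t i • x i) ∈ Z)
    (q : ℕ)
    (hSfin : ((fun x (i : Fin j) => projOf (x i)) '' (Z ∩ {x | ∀ i, x i ≠ 0})).Finite)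
    (hSq : ((fun x (i : Fin j) => projOf (x i)) '' (Z ∩ {x | ∀ i, x i ≠ 0})).ncard = q) :
    ∃ lam : ∀ i : Fin j, Fin (n i + 1) → k,
      (Z ∩ {x | ∀ i, ∑ t, lam i t * x i t = 1}).Finite ∧
      (Z ∩ {x | ∀ i, ∑ t, lam i t * x i t = 1}).ncard = q ∧
      (∀ x ∈ Z ∩ {x | ∀ i, ∑ t, lam i t * x i t = 1}, ∀ i, x i ≠ 0) ∧
      Set.BijOn (fun x (i : Fin j) => projOf (x i))
        (Z ∩ {x | ∀ i, ∑ t, lam i t * x i t = 1})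
        ((fun x (i : Fin j) => projOf (x i)) '' (Z ∩ {x | ∀ i, x i ≠ 0})) :=
  multicone_dehomogenize_count_general n Z hZ q hSfin hSq
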